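/- Let d ∈ ℕ, 0 < p, q ≤ ∞, r ∈ ℝ, and let p′, q′, r′ be the conjugate parameters. Then for all sequences λ = (λ_{j̄,k̄}) and μ = (μ_{j̄,k̄}) indexed by Γ^d = ℕ_{-1}^d × ℤ^d one has the Hölder-type inequality Σ_{(j̄,k̄) ∈ Γ^d} |λ_{j̄,k̄} μ_{j̄,k̄}| ≤ ‖λ‖_{s^r_{p,q}b(Γ^d)} · ‖μ‖_{s^{r′+1}_{p′,q′}b(Γ^d)}. -/

import Mathlib

open MeasureTheory
open scoped ENNReal NNReal

/-- The `ℓ_q`-norm of an `ℝ≥0∞`-valued sequence, with the usual supremum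
modification for `q = ∞`. -/
noncomputable def lqNormE {ι : Type*} (q : ℝ≥0∞) (a : ι → ℝ≥0∞) : ℝ≥0∞ :=
  if q = ∞ then ⨆ i, a i else (∑' i, a i ^ q.toReal) ^ (1 / q.toReal)

/-- `|j̄|₁` for `j̄ ∈ ℕ_{-1}^d`, where the level `j̄ᵢ ∈ ℕ_{-1} = {-1,0,1,…}` is encoded
by a natural number `jᵢ` via `j̄ᵢ = jᵢ - 1`. -/
noncomputable def lvlSum (d : ℕ) (j : Fin d → ℕ) : ℝ :=
  ∑ i, (((j i : ℤ) - 1).natAbs : ℝ)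

/-- The sequence space (quasi-)norm `‖·‖_{s^r_{p,q}b(Γ^d)}` on sequences indexed by
`Γ^d = ℕ_{-1}^d × ℤ^d` (levels in `ℕ_{-1}` encoded by naturals, shifted by one). -/
noncomputable def besovSeqNorm (d : ℕ) (p q : ℝ≥0∞) (r : ℝ)
    (lam : (Fin d → ℕ) × (Fin d → ℤ) → ℂ) : ℝ≥0∞ :=
  lqNormE q (fun j : Fin d → ℕ =>
    (2 : ℝ≥0∞) ^ (lvlSum d j * (r - p.toReal⁻¹)) *
      lqNormE p (fun k : Fin d → ℤ => (‖lam (j, k)‖₊ : ℝ≥0∞)))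

/-- Conjugate exponent: `p′ = p/(p-1)` for `1 < p ≤ ∞` and `p′ = ∞` for `0 < p ≤ 1`. -/
noncomputable def conjExp (p : ℝ≥0∞) : ℝ≥0∞ :=
  if p ≤ 1 then ∞ else (1 - p⁻¹)⁻¹

/-- `σ_p = max(0, 1/p - 1)`. -/
noncomputable def sigmaP (p : ℝ≥0∞) : ℝ :=
  max 0 (p.toReal⁻¹ - 1)

/-
Hölder's inequality is applied twice: in `k` on each level `j` with exponents `p, p′`, then in
`j` with exponents `q, q′`. For `p ≤ 1` the inner step is the embedding `ℓ_p ⊆ ℓ_1`, which is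
where `σ_p` enters. The level weights cancel because `1/p + 1/p′ = 1 + σ_p`, so that
`(r - 1/p) + (r′ + 1 - 1/p′) = 0`.
-/

namespace ENNReal

variable {ι : Type*}

lemma rpow_finsetSum_le_sum_rpow (s : Finset ι) (a : ι → ℝ≥0∞) {t : ℝ} (ht0 : 0 < t)
    (ht1 : t ≤ 1) : (∑ i ∈ s, a i) ^ t ≤ ∑ i ∈ s, a i ^ t := by
  classical
  induction s using Finset.induction with
  | empty => simp [zero_rpow_of_pos ht0]
  | insert i s hi ih =>
    rw [Finset.sum_insert hi, Finset.sum_insert hi]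
    exact (rpow_add_le_add_rpow _ _ ht0.le ht1).trans (by gcongr)

lemma tsum_le_rpow_tsum_rpow (a : ι → ℝ≥0∞) {t : ℝ} (ht0 : 0 < t) (ht1 : t ≤ 1) :
    ∑' i, a i ≤ (∑' i, a i ^ t) ^ (1 / t) := by
  rw [ENNReal.tsum_eq_iSup_sum]
  refine iSup_le fun s => ?_
  calc ∑ i ∈ s, a i = ((∑ i ∈ s, a i) ^ t) ^ (1 / t) := by
        rw [← rpow_mul, mul_one_div_cancel ht0.ne', rpow_one]
    _ ≤ (∑' i, a i ^ t) ^ (1 / t) := by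
        gcongr
        exact (rpow_finsetSum_le_sum_rpow s a ht0 ht1).trans (ENNReal.sum_le_tsum s)

lemma inner_le_Lp_mul_Lq_tsum (a b : ι → ℝ≥0∞) {p q : ℝ} (hpq : p.HolderConjugate q) :
    ∑' i, a i * b i ≤ (∑' i, a i ^ p) ^ (1 / p) * (∑' i, b i ^ q) ^ (1 / q) := by
  have := hpq.pos
  have := hpq.symm.pos
  rw [ENNReal.tsum_eq_iSup_sum]
  refine iSup_le fun s => (inner_le_Lp_mul_Lq s a b hpq).trans ?_
  gcongr <;> exact ENNReal.sum_le_tsum s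

end ENNReal

section Exponents

variable {p : ℝ≥0∞}

lemma conjExp_of_le_one (hp : p ≤ 1) : conjExp p = ∞ := if_pos hp

lemma conjExp_of_one_lt (hp : 1 < p) : conjExp p = (1 - p⁻¹)⁻¹ := if_neg hp.not_ge

lemma conjExp_top : conjExp ∞ = 1 := by
  simp [conjExp_of_one_lt ENNReal.one_lt_top]

lemma toReal_inv_conjExp_of_one_lt (hp : 1 < p) :
    (conjExp p).toReal⁻¹ = 1 - p.toReal⁻¹ := by
  rw [conjExp_of_one_lt hp, ← ENNReal.toReal_inv, inv_inv, ← ENNReal.toReal_inv,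
    ENNReal.toReal_sub_of_le (ENNReal.inv_le_one.2 hp.le) ENNReal.one_ne_top, ENNReal.toReal_one]

lemma holderConjugate_toReal_conjExp (hp : 1 < p) (hp_top : p ≠ ∞) :
    p.toReal.HolderConjugate (conjExp p).toReal := by
  refine Real.holderConjugate_iff.2 ⟨?_, ?_⟩
  · simpa using ENNReal.toReal_strict_mono hp_top hp
  · rw [toReal_inv_conjExp_of_one_lt hp]
    ring

lemma toReal_inv_add_toReal_inv_conjExp (hp : 0 < p) :
    p.toReal⁻¹ + (conjExp p).toReal⁻¹ = 1 + sigmaP p := by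
  rcases le_or_gt p 1 with hp1 | hp1
  · have hinv : 1 ≤ p.toReal⁻¹ := by
      rw [← ENNReal.toReal_inv]
      simpa using ENNReal.toReal_mono (ENNReal.inv_ne_top.2 hp.ne') (ENNReal.one_le_inv.2 hp1)
    rw [conjExp_of_le_one hp1, sigmaP, max_eq_right (by linarith)]
    simp
  · have hinv : p.toReal⁻¹ ≤ 1 := by
      rw [← ENNReal.toReal_inv]
      simpa using ENNReal.toReal_mono ENNReal.one_ne_top (ENNReal.inv_le_one.2 hp1.le)
    rw [toReal_inv_conjExp_of_one_lt hp1, sigmaP, max_eq_left (by linarith)]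
    ring

end Exponents

lemma lqNormE_top {ι : Type*} (a : ι → ℝ≥0∞) : lqNormE ∞ a = ⨆ i, a i := if_pos rfl

lemma lqNormE_of_ne_top {ι : Type*} {q : ℝ≥0∞} (hq : q ≠ ∞) (a : ι → ℝ≥0∞) :
    lqNormE q a = (∑' i, a i ^ q.toReal) ^ (1 / q.toReal) := if_neg hq

lemma tsum_mul_le_lqNormE_mul_lqNormE_conjExp {ι : Type*} {p : ℝ≥0∞} (hp : 0 < p)
    (a b : ι → ℝ≥0∞) : ∑' i, a i * b i ≤ lqNormE p a * lqNormE (conjExp p) b := by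
  rcases eq_or_ne p ∞ with rfl | hp_top
  · rw [conjExp_top, lqNormE_top, lqNormE_of_ne_top ENNReal.one_ne_top]
    simp only [ENNReal.toReal_one, ENNReal.rpow_one, div_one, ← ENNReal.tsum_mul_left]
    exact ENNReal.tsum_le_tsum fun i => mul_le_mul_left (le_iSup a i) _
  rcases le_or_gt p 1 with hp1 | hp1
  · have ht0 : 0 < p.toReal := ENNReal.toReal_pos hp.ne' hp_top
    have ht1 : p.toReal ≤ 1 := by simpa using ENNReal.toReal_mono ENNReal.one_ne_top hp1
    rw [conjExp_of_le_one hp1, lqNormE_top, lqNormE_of_ne_top hp_top]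
    calc ∑' i, a i * b i ≤ ∑' i, a i * ⨆ j, b j :=
          ENNReal.tsum_le_tsum fun i => mul_le_mul_right (le_iSup b i) _
      _ = (∑' i, a i) * ⨆ j, b j := ENNReal.tsum_mul_right
      _ ≤ _ := mul_le_mul_left (ENNReal.tsum_le_rpow_tsum_rpow a ht0 ht1) _
  · have hpq := holderConjugate_toReal_conjExp hp1 hp_top
    rw [lqNormE_of_ne_top hp_top, lqNormE_of_ne_top (ENNReal.toReal_ne_zero.1 hpq.symm.ne_zero).2]
    exact ENNReal.inner_le_Lp_mul_Lq_tsum a b hpq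

lemma two_rpow_level_mul_two_rpow_level_conj {p : ℝ≥0∞} (hp : 0 < p) (r l : ℝ) :
    (2 : ℝ≥0∞) ^ (l * (r - p.toReal⁻¹)) *
      (2 : ℝ≥0∞) ^ (l * ((-r + sigmaP p + 1) - (conjExp p).toReal⁻¹)) = 1 := by
  have hsum := toReal_inv_add_toReal_inv_conjExp hp
  rw [← ENNReal.rpow_add _ _ two_ne_zero ENNReal.ofNat_ne_top, ← mul_add,
    show r - p.toReal⁻¹ + (-r + sigmaP p + 1 - (conjExp p).toReal⁻¹) = 0 by linarith,
    mul_zero, ENNReal.rpow_zero]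

/-- Hölder-type inequality for the Besov sequence spaces:
`Σ |λ_{j̄,k̄} μ_{j̄,k̄}| ≤ ‖λ‖_{s^r_{p,q}b} ‖μ‖_{s^{r′+1}_{p′,q′}b}` with `r′ = -r + σ_p`. -/
theorem statement8 (d : ℕ) (p q : ℝ≥0∞) (hp : 0 < p) (hq : 0 < q) (r : ℝ)
    (lam mu : (Fin d → ℕ) × (Fin d → ℤ) → ℂ) :
    ∑' jk : (Fin d → ℕ) × (Fin d → ℤ), (‖lam jk * mu jk‖₊ : ℝ≥0∞) ≤
      besovSeqNorm d p q r lam *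
        besovSeqNorm d (conjExp p) (conjExp q) ((-r + sigmaP p) + 1) mu := by
  refine (ENNReal.tsum_prod' ..).trans_le
    ((ENNReal.tsum_le_tsum fun j => ?_).trans (tsum_mul_le_lqNormE_mul_lqNormE_conjExp hq _ _))
  simp only [nnnorm_mul, ENNReal.coe_mul]
  rw [mul_mul_mul_comm, two_rpow_level_mul_two_rpow_level_conj hp, one_mul]
  exact tsum_mul_le_lqNormE_mul_lqNormE_conjExp hp _ _
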